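/- arXiv:2502.06267 — 4 statements merged into one kernel-verified Lean document; each statement's English description precedes it below -/
import Mathlib

section
/- For any α ∈ M(T, η̄) (right-continuous nondecreasing function with α(0)=0 and α(t+T)=α(t)+α(T)=α(t)+Tη̄), the function S(t) = e^{-α(t)-δt} ∫₀ᵀ K(t,r) c(r) e^{α(r)+δr} dr satisfies 0 ≤ S(t) ≤ ‖c‖_{L¹[0,T]} / (1 - e^{-(η̄+δ)T}) for all t ∈ [0,T), where K(t,r) = (1-e^{-(η̄+δ)T})⁻¹ for r < t and K(t,r) = (e^{(η̄+δ)T}-1)⁻¹ for r ≥ t. -/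
open MeasureTheory intervalIntegral Real Set Filter Topology

noncomputable def Kker (T δ ηb t r : ℝ) : ℝ :=
  if r < t then (1 - Real.exp (-(ηb + δ) * T))⁻¹ else (Real.exp ((ηb + δ) * T) - 1)⁻¹

noncomputable def Sfun (T δ ηb : ℝ) (c α : ℝ → ℝ) (t : ℝ) : ℝ :=
  Real.exp (-(α t) - δ * t) * ∫ r in (0:ℝ)..T, Kker T δ ηb t r * c r * Real.exp (α r + δ * r)

noncomputable def Phi (T δ ηb : ℝ) (c w α : ℝ → ℝ) : ℝ :=
  ∫ t in (0:ℝ)..T, w t * Sfun T δ ηb c α t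

def MemM (T ηb : ℝ) (α : ℝ → ℝ) : Prop :=
  Monotone α ∧ (∀ t, ContinuousWithinAt α (Set.Ici t) t) ∧ α 0 = 0 ∧
    (∀ t, α (t + T) = α t + α T) ∧ α T = T * ηb

noncomputable def hfun (T δ ηb : ℝ) (c w α : ℝ → ℝ) (t : ℝ) : ℝ :=
  w t * Real.exp (-(α t) - δ * t) *
      (∫ r in (0:ℝ)..T, Kker T δ ηb t r * c r * Real.exp (α r + δ * r)) -
    c t * Real.exp (α t + δ * t) *
      (∫ r in (0:ℝ)..T, Kker T δ ηb r t * w r * Real.exp (-(α r) - δ * r))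

noncomputable def psi (T δ ηb : ℝ) (c w α : ℝ → ℝ) (t : ℝ) : ℝ :=
  - ∫ s in (0:ℝ)..t, hfun T δ ηb c w α s

def SuppM (α : ℝ → ℝ) : Set ℝ := {t | ∀ ε > 0, 0 < α (t + ε) - α (t - ε)}

def IsOpt (T δ ηb : ℝ) (c w α : ℝ → ℝ) : Prop :=
  MemM T ηb α ∧ ∀ β, MemM T ηb β → Phi T δ ηb c w α ≤ Phi T δ ηb c w β

/-!
Writing `S t = ∫₀ᵀ G(t,r) c(r) dr`, it suffices to bound the weight
`G(t,r) = e^{-α(t)-δt} K(t,r) e^{α(r)+δr}` by `(1 - e^{-(η̄+δ)T})⁻¹`. For `r < t` monotonicity gives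
`e^{α(r)+δr-α(t)-δt} ≤ 1`; for `r ≥ t` the exponent is at most `α(T) + δT = (η̄+δ)T`, and
`e^{a} (e^{a} - 1)⁻¹ = (1 - e^{-a})⁻¹`.
-/

lemma exp_mul_inv_exp_sub_one {a : ℝ} (ha : 0 < a) :
    exp a * (exp a - 1)⁻¹ = (1 - exp (-a))⁻¹ := by
  have : exp a - 1 ≠ 0 := (sub_pos.2 (one_lt_exp_iff.2 ha)).ne'
  rw [exp_neg]
  field_simp

lemma inv_one_sub_exp_nonneg {a : ℝ} (ha : a < 0) : 0 ≤ (1 - exp a)⁻¹ :=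
  inv_nonneg.2 (sub_nonneg.2 (exp_lt_one_iff.2 ha).le)

lemma inv_exp_sub_one_nonneg {a : ℝ} (ha : 0 < a) : 0 ≤ (exp a - 1)⁻¹ :=
  inv_nonneg.2 (sub_nonneg.2 (one_lt_exp_iff.2 ha).le)

lemma integral_mul_le_of_nonneg_of_le {f g : ℝ → ℝ} {a b M : ℝ} (hab : a ≤ b)
    (hf : AEStronglyMeasurable f (volume.restrict (Ioc a b)))
    (hf0 : ∀ x ∈ Icc a b, 0 ≤ f x) (hfM : ∀ x ∈ Icc a b, f x ≤ M)
    (hg : IntegrableOn g (Icc a b)) :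
    ∫ x in a..b, f x * g x ≤ M * ∫ x in Icc a b, |g x| := by
  have hg' : IntegrableOn g (Ioc a b) := hg.mono_set Ioc_subset_Icc_self
  have hfg : IntegrableOn (fun x ↦ f x * g x) (Ioc a b) := by
    refine hg'.bdd_mul hf (c := M) (ae_restrict_of_forall_mem measurableSet_Ioc fun x hx ↦ ?_)
    rw [norm_of_nonneg (hf0 x (Ioc_subset_Icc_self hx))]
    exact hfM x (Ioc_subset_Icc_self hx)
  rw [intervalIntegral.integral_of_le hab, integral_Icc_eq_integral_Ioc,
    ← MeasureTheory.integral_const_mul]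
  refine setIntegral_mono_on hfg (hg'.abs.const_mul M) measurableSet_Ioc fun x hx ↦ ?_
  have hx' := Ioc_subset_Icc_self hx
  calc f x * g x ≤ f x * |g x| := mul_le_mul_of_nonneg_left (le_abs_self _) (hf0 x hx')
    _ ≤ M * |g x| := mul_le_mul_of_nonneg_right (hfM x hx') (abs_nonneg _)

section

variable {T δ ηb : ℝ}

lemma Kker_nonneg (h : 0 < (ηb + δ) * T) (t r : ℝ) : 0 ≤ Kker T δ ηb t r := by
  unfold Kker
  split_ifs
  · exact inv_one_sub_exp_nonneg (by linarith)
  · exact inv_exp_sub_one_nonneg h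

lemma measurable_Kker (t : ℝ) : Measurable (Kker T δ ηb t) :=
  Measurable.ite measurableSet_Iio measurable_const measurable_const

noncomputable def sfunKernel (T δ ηb : ℝ) (α : ℝ → ℝ) (t r : ℝ) : ℝ :=
  exp (-(α t) - δ * t) * Kker T δ ηb t r * exp (α r + δ * r)

lemma Sfun_eq_integral_sfunKernel_mul (c α : ℝ → ℝ) (t : ℝ) :
    Sfun T δ ηb c α t = ∫ r in (0:ℝ)..T, sfunKernel T δ ηb α t r * c r := by
  rw [Sfun, ← intervalIntegral.integral_const_mul]
  congr 1 with r
  unfold sfunKernel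
  ring

lemma sfunKernel_nonneg (h : 0 < (ηb + δ) * T) (α : ℝ → ℝ) (t r : ℝ) :
    0 ≤ sfunKernel T δ ηb α t r :=
  mul_nonneg (mul_nonneg (exp_pos _).le (Kker_nonneg h t r)) (exp_pos _).le

lemma measurable_sfunKernel {α : ℝ → ℝ} (hα : Measurable α) (t : ℝ) :
    Measurable (sfunKernel T δ ηb α t) :=
  (measurable_const.mul (measurable_Kker t)).mul
    (hα.add (measurable_const.mul measurable_id)).exp

lemma sfunKernel_le {α : ℝ → ℝ} (hmono : Monotone α) (h0 : α 0 = 0) (hT : α T = T * ηb)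
    (hδ : 0 ≤ δ) (h : 0 < (ηb + δ) * T) {t r : ℝ} (ht : 0 ≤ t) (hr : r ≤ T) :
    sfunKernel T δ ηb α t r ≤ (1 - exp (-(ηb + δ) * T))⁻¹ := by
  rw [sfunKernel, mul_right_comm, ← exp_add, Kker]
  split_ifs with hrt
  · have hexp : exp (-(α t) - δ * t + (α r + δ * r)) ≤ 1 := by
      have := hmono hrt.le
      have := mul_le_mul_of_nonneg_left hrt.le hδ
      exact exp_le_one_iff.2 (by linarith)
    exact mul_le_of_le_one_left (inv_one_sub_exp_nonneg (by linarith)) hexp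
  · have hexp : exp (-(α t) - δ * t + (α r + δ * r)) ≤ exp ((ηb + δ) * T) := by
      have := hT ▸ hmono hr
      have := h0 ▸ hmono ht
      have := mul_le_mul_of_nonneg_left hr hδ
      have := mul_nonneg hδ ht
      exact exp_le_exp.2 (by linarith)
    rw [neg_mul, ← exp_mul_inv_exp_sub_one h]
    exact mul_le_mul_of_nonneg_right hexp (inv_exp_sub_one_nonneg h)

end

theorem stmt1_general (T δ ηb : ℝ) (c α : ℝ → ℝ)
    (hT : 0 < T) (hδ : 0 < δ) (hη : 0 < ηb)
    (hc0 : ∀ t, 0 ≤ c t)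
    (hcI : IntegrableOn c (Set.Icc 0 T))
    (hα : MemM T ηb α) :
    ∀ t ∈ Set.Ico (0:ℝ) T,
      0 ≤ Sfun T δ ηb c α t ∧
      Sfun T δ ηb c α t ≤ (∫ r in Set.Icc (0:ℝ) T, |c r|) / (1 - Real.exp (-(ηb + δ) * T)) := by
  obtain ⟨hmono, -, h0, -, hαT⟩ := hα
  have hrate : 0 < (ηb + δ) * T := by positivity
  intro t ht
  rw [Sfun_eq_integral_sfunKernel_mul]
  refine ⟨intervalIntegral.integral_nonneg hT.le fun r _ ↦
      mul_nonneg (sfunKernel_nonneg hrate α t r) (hc0 r), ?_⟩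
  rw [div_eq_inv_mul]
  exact integral_mul_le_of_nonneg_of_le hT.le
    (measurable_sfunKernel hmono.measurable t).aestronglyMeasurable
    (fun r _ ↦ sfunKernel_nonneg hrate α t r)
    (fun r hr ↦ sfunKernel_le hmono h0 hαT hδ.le hrate ht.1 hr.2) hcI

theorem stmt1 (T δ ηb : ℝ) (c α : ℝ → ℝ)
    (hT : 0 < T) (hδ : 0 < δ) (hη : 0 < ηb)
    (hc0 : ∀ t, 0 ≤ c t) (hcP : ∀ t, c (t + T) = c t)
    (hcI : IntegrableOn c (Set.Icc 0 T))
    (hα : MemM T ηb α) :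
    ∀ t ∈ Set.Ico (0:ℝ) T,
      0 ≤ Sfun T δ ηb c α t ∧
      Sfun T δ ηb c α t ≤ (∫ r in Set.Icc (0:ℝ) T, |c r|) / (1 - Real.exp (-(ηb + δ) * T)) :=
  stmt1_general T δ ηb c α hT hδ hη hc0 hcI hα
end

section
/- Let α, α̃ ∈ M(T, η̄) with α ≠ α̃, and define φ(ε) = Φ[(1-ε)α + εα̃] for ε ∈ [0,1], where Φ[β] = ∫₀ᵀ w(t) e^{-β(t)-δt} ∫₀ᵀ K(t,r) c(r) e^{β(r)+δr} dr dt. If either c > 0 a.e. or w > 0 a.e., then φ''(ε) > 0 for all ε ∈ [0,1]; consequently Φ[(1-ε)α + εα̃] < (1-ε)Φ[α] + εΦ[α̃] for ε ∈ (0,1). -/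
open MeasureTheory intervalIntegral Real Set Filter Topology

/-!
Writing `Φ` as a double integral over `(0, T]²` and splitting off the factor that depends on the
base point, `e ↦ Φ[α + e g]` with `g = β - α` becomes the moment generating function of the
increment `G (t, r) = g r - g t` under the finite measure with density
`w t * K t r * c r * exp (α r + δ r - α t - δ t)`. Its second derivative `∫ G² exp (e G)` is
positive unless `G = 0` almost everywhere for that measure. When one of `c`, `w` is positive a.e.
and the other is not a.e. zero, this forces `g` to be a.e. constant on `(0, T]`; right-continuity
and periodicity of `g` then make it constant, hence zero, i.e. `α = β`.
-/

open ProbabilityTheory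

lemma eq_of_ae_eq_of_continuousWithinAt_Ici {g : ℝ → ℝ} {a b x v : ℝ} (hx : x ∈ Ico a b)
    (hg : ContinuousWithinAt g (Ici x) x) (hv : ∀ᵐ y ∂volume.restrict (Ioc a b), g y = v) :
    g x = v := by
  by_contra hne
  obtain ⟨u, hxu, hu⟩ :=
    mem_nhdsGE_iff_exists_Ico_subset.1 (hg (isOpen_ne.mem_nhds hne))
  have hsub : Ioo x (min u b) ⊆ {y | ¬ g y = v} ∩ Ioc a b := fun y hy =>
    ⟨hu ⟨hy.1.le, hy.2.trans_le (min_le_left _ _)⟩,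
      hx.1.trans_lt hy.1, hy.2.le.trans (min_le_right _ _)⟩
  have hnull : volume (Ioo x (min u b)) = 0 :=
    measure_mono_null hsub (by rwa [← Measure.restrict_apply' measurableSet_Ioc, ← ae_iff])
  rw [Real.volume_Ioo, ENNReal.ofReal_eq_zero, sub_nonpos] at hnull
  exact (lt_min hxu hx.2).not_ge hnull

lemma Function.Periodic.eq_of_ae_eq_on_period {g : ℝ → ℝ} {T v : ℝ}
    (hT : 0 < T) (hg : Function.Periodic g T) (hrc : ∀ x, ContinuousWithinAt g (Ici x) x)
    (hv : ∀ᵐ y ∂volume.restrict (Ioc 0 T), g y = v) (x : ℝ) : g x = v := by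
  obtain ⟨y, hy, hxy⟩ := hg.exists_mem_Ico₀ hT x
  exact hxy ▸ eq_of_ae_eq_of_continuousWithinAt_Ici hy (hrc y) hv

lemma Monotone.abs_sub_le_of_mem_Icc {u : ℝ → ℝ} (hu : Monotone u) {a b x y : ℝ}
    (hx : x ∈ Icc a b) (hy : y ∈ Icc a b) : |u y - u x| ≤ u b - u a :=
  abs_sub_le_iff.2 ⟨by linarith [hu hy.2, hu hx.1], by linarith [hu hx.2, hu hy.1]⟩

lemma abs_sub_sub_le_of_monotone {u v : ℝ → ℝ} (hu : Monotone u) (hv : Monotone v) {a b x y : ℝ}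
    (hx : x ∈ Icc a b) (hy : y ∈ Icc a b) :
    |(u y - v y) - (u x - v x)| ≤ (u b - u a) + (v b - v a) :=
  calc |(u y - v y) - (u x - v x)| = |(u y - u x) - (v y - v x)| := by ring_nf
    _ ≤ |u y - u x| + |v y - v x| := abs_sub _ _
    _ ≤ _ := add_le_add (hu.abs_sub_le_of_mem_Icc hx hy) (hv.abs_sub_le_of_mem_Icc hx hy)

lemma norm_exp_mul_le {x C : ℝ} (hx : |x| ≤ C) (t : ℝ) : ‖exp (t * x)‖ ≤ exp (|t| * C) := by
  rw [norm_of_nonneg (exp_nonneg _), exp_le_exp]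
  calc t * x ≤ |t * x| := le_abs_self _
    _ = |t| * |x| := abs_mul _ _
    _ ≤ |t| * C := mul_le_mul_of_nonneg_left hx (abs_nonneg t)

lemma integral_pos_of_ae_pos_on {Ω : Type*} {mΩ : MeasurableSpace Ω} {μ : Measure Ω}
    {f : Ω → ℝ} {s : Set Ω} (hf : Integrable f μ) (hf0 : ∀ ω, 0 ≤ f ω) (hs : μ s ≠ 0)
    (hpos : ∀ᵐ ω ∂μ, ω ∈ s → 0 < f ω) : 0 < ∫ ω, f ω ∂μ := by
  rw [integral_pos_iff_support_of_nonneg_ae (ae_of_all _ hf0) hf]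
  refine (pos_iff_ne_zero.2 hs).trans_le (measure_mono_ae ?_)
  filter_upwards [hpos] with ω hω hωs
  exact (hω hωs).ne'

section WeightedVariation

variable {X Y : Type*} {mX : MeasurableSpace X} {mY : MeasurableSpace Y}
  {μ : Measure X} {ν : Measure Y} [SFinite μ] [SFinite ν]
  {w : X → ℝ} {c : Y → ℝ} {k : X × Y → ℝ} {g₁ : X → ℝ} {g₂ : Y → ℝ}

lemma integral_weighted_sq_sub_pos_of_ae_pos_right (hw0 : ∀ x, 0 ≤ w x) (hc0 : ∀ y, 0 ≤ c y)
    (hk : ∀ p, 0 < k p)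
    (hint : Integrable (fun p => w p.1 * c p.2 * k p * (g₂ p.2 - g₁ p.1) ^ 2) (μ.prod ν))
    (hw : ¬ w =ᵐ[μ] 0) (hc : ∀ᵐ y ∂ν, 0 < c y) (hg : ∀ v, ¬ ∀ᵐ y ∂ν, g₂ y = v) :
    0 < ∫ p, w p.1 * c p.2 * k p * (g₂ p.2 - g₁ p.1) ^ 2 ∂μ.prod ν := by
  have hf0 : ∀ p : X × Y, 0 ≤ w p.1 * c p.2 * k p * (g₂ p.2 - g₁ p.1) ^ 2 := fun p => by
    have := hk p; have := hw0 p.1; have := hc0 p.2; positivity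
  rw [integral_prod _ hint]
  refine integral_pos_of_ae_pos_on hint.integral_prod_left
    (fun x => integral_nonneg fun y => hf0 (x, y)) (s := {x | w x ≠ 0}) hw ?_
  filter_upwards [hint.prod_right_ae] with x hxint hwx
  refine integral_pos_of_ae_pos_on hxint (fun y => hf0 (x, y))
    (s := {y | ¬ g₂ y = g₁ x}) (fun h => hg _ (ae_iff.2 h)) ?_
  filter_upwards [hc] with y hcy hgy
  have := hk (x, y)
  have : 0 < w x := (hw0 x).lt_of_ne' hwx
  have : g₂ y - g₁ x ≠ 0 := sub_ne_zero.2 hgy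
  positivity

lemma integral_weighted_sq_sub_pos (hw0 : ∀ x, 0 ≤ w x) (hc0 : ∀ y, 0 ≤ c y)
    (hk : ∀ p, 0 < k p)
    (hint : Integrable (fun p => w p.1 * c p.2 * k p * (g₂ p.2 - g₁ p.1) ^ 2) (μ.prod ν))
    (hw : ¬ w =ᵐ[μ] 0) (hc : ¬ c =ᵐ[ν] 0) (hpos : (∀ᵐ y ∂ν, 0 < c y) ∨ (∀ᵐ x ∂μ, 0 < w x))
    (hg₁ : ∀ v, ¬ ∀ᵐ x ∂μ, g₁ x = v) (hg₂ : ∀ v, ¬ ∀ᵐ y ∂ν, g₂ y = v) :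
    0 < ∫ p, w p.1 * c p.2 * k p * (g₂ p.2 - g₁ p.1) ^ 2 ∂μ.prod ν := by
  rcases hpos with hc' | hw'
  · exact integral_weighted_sq_sub_pos_of_ae_pos_right hw0 hc0 hk hint hw hc' hg₂
  · have hswap : ∀ p : Y × X, w p.swap.1 * c p.swap.2 * k p.swap * (g₂ p.swap.2 - g₁ p.swap.1) ^ 2
        = c p.1 * w p.2 * k p.swap * (g₁ p.2 - g₂ p.1) ^ 2 := fun p => by
      simp only [Prod.fst_swap, Prod.snd_swap]; ring
    rw [← integral_prod_swap, funext hswap]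
    refine integral_weighted_sq_sub_pos_of_ae_pos_right hc0 hw0 (fun p => hk p.swap) ?_ hc hw' hg₁
    simpa only [Function.comp_def, hswap] using hint.swap

end WeightedVariation

section BoundedMGF

variable {Ω : Type*} {mΩ : MeasurableSpace Ω} {ν : Measure Ω} [IsFiniteMeasure ν] {G : Ω → ℝ}
  {C : ℝ}

lemma integrable_exp_mul_of_ae_abs_le (hG : AEStronglyMeasurable G ν) (hC : ∀ᵐ ω ∂ν, |G ω| ≤ C)
    (t : ℝ) : Integrable (fun ω => exp (t * G ω)) ν :=
  Integrable.of_bound (by fun_prop) (exp (|t| * C)) (hC.mono fun _ hω => norm_exp_mul_le hω t)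

lemma deriv_deriv_mgf_pos (hG : AEStronglyMeasurable G ν) (hC : ∀ᵐ ω ∂ν, |G ω| ≤ C)
    (hpos : 0 < ∫ ω, G ω ^ 2 ∂ν) (t : ℝ) : 0 < deriv (deriv (mgf G ν)) t := by
  have hint : t ∈ interior (integrableExpSet G ν) := by
    rw [show integrableExpSet G ν = univ from
      eq_univ_of_forall (integrable_exp_mul_of_ae_abs_le hG hC), interior_univ]
    exact mem_univ t
  rw [show deriv (deriv (mgf G ν)) t = iteratedDeriv 2 (mgf G ν) t by
      rw [iteratedDeriv_eq_iterate]; rfl,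
    iteratedDeriv_mgf hint,
    integral_pos_iff_support_of_nonneg_ae (ae_of_all _ fun ω => by positivity)
      (integrable_pow_mul_exp_of_mem_interior_integrableExpSet hint 2)]
  rw [integral_pos_iff_support_of_nonneg_ae (ae_of_all _ fun ω => by positivity)
    (Integrable.of_integral_ne_zero hpos.ne')] at hpos
  convert hpos using 2
  ext ω
  simp [(exp_pos _).ne']

lemma strictConvexOn_mgf (hG : AEStronglyMeasurable G ν) (hC : ∀ᵐ ω ∂ν, |G ω| ≤ C)
    (hpos : 0 < ∫ ω, G ω ^ 2 ∂ν) : StrictConvexOn ℝ univ (mgf G ν) :=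
  strictConvexOn_univ_of_deriv2_pos (continuous_mgf (integrable_exp_mul_of_ae_abs_le hG hC))
    (deriv_deriv_mgf_pos hG hC hpos)

end BoundedMGF

lemma integral_withDensity_ofReal {Ω : Type*} {mΩ : MeasurableSpace Ω} {μ : Measure Ω}
    {D : Ω → ℝ} (hD : AEMeasurable D μ) (hD0 : ∀ ω, 0 ≤ D ω) (f : Ω → ℝ) :
    ∫ ω, f ω ∂μ.withDensity (fun ω => ENNReal.ofReal (D ω)) = ∫ ω, D ω * f ω ∂μ := by
  rw [integral_withDensity_eq_integral_toReal_smul₀ hD.ennreal_ofReal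
    (ae_of_all _ fun _ => ENNReal.ofReal_lt_top)]
  simp only [ENNReal.toReal_ofReal (hD0 _), smul_eq_mul]

lemma abs_Kker_le (T δ ηb t r : ℝ) :
    |Kker T δ ηb t r| ≤ max |(1 - exp (-(ηb + δ) * T))⁻¹| |(exp ((ηb + δ) * T) - 1)⁻¹| := by
  unfold Kker; split_ifs <;> simp

lemma Kker_pos {T δ ηb : ℝ} (h : 0 < (ηb + δ) * T) (t r : ℝ) : 0 < Kker T δ ηb t r := by
  unfold Kker
  split_ifs
  · rw [inv_pos, sub_pos, Real.exp_lt_one_iff, neg_mul, neg_lt_zero]; exact h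
  · rw [inv_pos, sub_pos, one_lt_exp_iff]; exact h

lemma measurable_Kker_s2 (T δ ηb : ℝ) : Measurable fun p : ℝ × ℝ => Kker T δ ηb p.1 p.2 :=
  Measurable.ite (measurableSet_lt measurable_snd measurable_fst) measurable_const measurable_const

lemma MemM.not_ae_sub_eq_const {T ηb : ℝ} {α β : ℝ → ℝ} (hT : 0 < T) (hα : MemM T ηb α)
    (hβ : MemM T ηb β) (hne : α ≠ β) (v : ℝ) :
    ¬ ∀ᵐ x ∂volume.restrict (Ioc 0 T), (β - α) x = v := by
  obtain ⟨-, hαrc, hα0, hαper, hαT⟩ := hα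
  obtain ⟨-, hβrc, hβ0, hβper, hβT⟩ := hβ
  intro hv
  have hper : Function.Periodic (β - α) T := fun x => by
    simp only [Pi.sub_apply, hαper, hβper, hαT, hβT]; ring
  have hgv := hper.eq_of_ae_eq_on_period hT (fun x => (hβrc x).sub (hαrc x)) hv
  have hv0 : v = 0 := by rw [← hgv 0]; simp [hα0, hβ0]
  exact hne (funext fun x => by linarith [hgv x, Pi.sub_apply β α x])

noncomputable abbrev squareMeasure (T : ℝ) : Measure (ℝ × ℝ) :=
  (volume.restrict (Ioc 0 T)).prod (volume.restrict (Ioc 0 T))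

lemma ae_mem_squareMeasure (T : ℝ) : ∀ᵐ p ∂squareMeasure T, p.1 ∈ Ioc 0 T ∧ p.2 ∈ Ioc 0 T := by
  rw [squareMeasure, Measure.prod_restrict]
  exact ae_restrict_mem (measurableSet_Ioc.prod measurableSet_Ioc)

noncomputable def phiDensity (T δ ηb : ℝ) (c w a : ℝ → ℝ) (p : ℝ × ℝ) : ℝ :=
  w p.1 * c p.2 * (Kker T δ ηb p.1 p.2 * exp (a p.2 + δ * p.2 - (a p.1 + δ * p.1)))

noncomputable def phiMeasure (T δ ηb : ℝ) (c w a : ℝ → ℝ) : Measure (ℝ × ℝ) :=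
  (squareMeasure T).withDensity fun p => ENNReal.ofReal (phiDensity T δ ηb c w a p)

section PhiAsMGF

variable {T δ ηb : ℝ} {c w α : ℝ → ℝ}

lemma Phi_eq_integral_phiDensity (hT : 0 ≤ T) {a : ℝ → ℝ}
    (hint : Integrable (phiDensity T δ ηb c w a) (squareMeasure T)) :
    Phi T δ ηb c w a = ∫ p, phiDensity T δ ηb c w a p ∂squareMeasure T := by
  rw [integral_prod _ hint]
  simp only [Phi, Sfun, phiDensity, intervalIntegral.integral_of_le hT,
    ← MeasureTheory.integral_const_mul]
  refine MeasureTheory.integral_congr_ae (ae_of_all _ fun t =>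
    MeasureTheory.integral_congr_ae (ae_of_all _ fun r => ?_))
  beta_reduce
  rw [show a r + δ * r - (a t + δ * t) = -a t - δ * t + (a r + δ * r) by ring,
    exp_add (-a t - δ * t)]
  ring

lemma phiDensity_add_mul (g : ℝ → ℝ) (e : ℝ) (p : ℝ × ℝ) :
    phiDensity T δ ηb c w (fun t => α t + e * g t) p =
      phiDensity T δ ηb c w α p * exp (e * (g p.2 - g p.1)) := by
  rw [phiDensity, phiDensity, show α p.2 + e * g p.2 + δ * p.2 - (α p.1 + e * g p.1 + δ * p.1)
    = α p.2 + δ * p.2 - (α p.1 + δ * p.1) + e * (g p.2 - g p.1) by ring, exp_add]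
  ring

lemma phiDensity_nonneg (hK : 0 < (ηb + δ) * T) (hc0 : ∀ t, 0 ≤ c t) (hw0 : ∀ t, 0 ≤ w t)
    (p : ℝ × ℝ) : 0 ≤ phiDensity T δ ηb c w α p := by
  have := Kker_pos hK p.1 p.2
  have := hc0 p.2
  have := hw0 p.1
  unfold phiDensity
  positivity

lemma integrable_phiDensity (hδ : 0 ≤ δ) (hα : Monotone α) (hc : IntegrableOn c (Ioc 0 T))
    (hw : IntegrableOn w (Ioc 0 T)) : Integrable (phiDensity T δ ηb c w α) (squareMeasure T) := by
  have hu : Monotone fun x => α x + δ * x := hα.add (monotone_id.const_mul hδ)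
  refine (hw.mul_prod hc).mul_bdd (c := max |(1 - exp (-(ηb + δ) * T))⁻¹|
    |(exp ((ηb + δ) * T) - 1)⁻¹| * exp (α T + δ * T - (α 0 + δ * 0))) ?_ ?_
  · have := measurable_Kker_s2 T δ ηb
    have := hα.measurable
    fun_prop
  · filter_upwards [ae_mem_squareMeasure T] with p ⟨h₁, h₂⟩
    rw [norm_mul, norm_of_nonneg (exp_nonneg _), Real.norm_eq_abs]
    refine mul_le_mul (abs_Kker_le _ _ _ _ _) (exp_le_exp.2 ?_) (exp_nonneg _)
      ((abs_nonneg _).trans (abs_Kker_le T δ ηb 0 0))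
    exact (le_abs_self _).trans
      (hu.abs_sub_le_of_mem_Icc (Ioc_subset_Icc_self h₁) (Ioc_subset_Icc_self h₂))

lemma integral_phiMeasure (hK : 0 < (ηb + δ) * T) (hδ : 0 ≤ δ) (hα : Monotone α)
    (hc0 : ∀ t, 0 ≤ c t) (hw0 : ∀ t, 0 ≤ w t) (hc : IntegrableOn c (Ioc 0 T))
    (hw : IntegrableOn w (Ioc 0 T)) (f : ℝ × ℝ → ℝ) :
    ∫ p, f p ∂phiMeasure T δ ηb c w α = ∫ p, phiDensity T δ ηb c w α p * f p ∂squareMeasure T :=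
  integral_withDensity_ofReal (integrable_phiDensity hδ hα hc hw).aemeasurable
    (phiDensity_nonneg hK hc0 hw0) f

lemma isFiniteMeasure_phiMeasure (hδ : 0 ≤ δ) (hα : Monotone α) (hc : IntegrableOn c (Ioc 0 T))
    (hw : IntegrableOn w (Ioc 0 T)) : IsFiniteMeasure (phiMeasure T δ ηb c w α) :=
  isFiniteMeasure_withDensity_ofReal (integrable_phiDensity hδ hα hc hw).2

variable {g : ℝ → ℝ} {C : ℝ}

lemma ae_phiMeasure_abs_sub_le (hgC : ∀ x ∈ Ioc 0 T, ∀ y ∈ Ioc 0 T, |g y - g x| ≤ C) :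
    ∀ᵐ p ∂phiMeasure T δ ηb c w α, |g p.2 - g p.1| ≤ C :=
  (withDensity_absolutelyContinuous _ _).ae_le
    ((ae_mem_squareMeasure T).mono fun _ hp => hgC _ hp.1 _ hp.2)

lemma Phi_add_mul_eq_mgf (hT : 0 ≤ T) (hδ : 0 ≤ δ) (hK : 0 < (ηb + δ) * T) (hα : Monotone α)
    (hc0 : ∀ t, 0 ≤ c t) (hw0 : ∀ t, 0 ≤ w t) (hc : IntegrableOn c (Ioc 0 T))
    (hw : IntegrableOn w (Ioc 0 T)) (hg : Measurable g)
    (hgC : ∀ x ∈ Ioc 0 T, ∀ y ∈ Ioc 0 T, |g y - g x| ≤ C) (e : ℝ) :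
    Phi T δ ηb c w (fun t => α t + e * g t) =
      mgf (fun p => g p.2 - g p.1) (phiMeasure T δ ηb c w α) e := by
  have hint : Integrable (fun p => phiDensity T δ ηb c w α p * exp (e * (g p.2 - g p.1)))
      (squareMeasure T) := by
    refine (integrable_phiDensity hδ hα hc hw).mul_bdd (c := exp (|e| * C)) (by fun_prop) ?_
    filter_upwards [ae_mem_squareMeasure T] with p hp
    exact norm_exp_mul_le (hgC _ hp.1 _ hp.2) e
  rw [Phi_eq_integral_phiDensity hT (by simpa only [← phiDensity_add_mul] using hint), mgf,
    integral_phiMeasure hK hδ hα hc0 hw0 hc hw]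
  simp only [phiDensity_add_mul]

lemma integral_sq_sub_phiMeasure_pos (hδ : 0 ≤ δ) (hK : 0 < (ηb + δ) * T)
    (hα : Monotone α) (hc0 : ∀ t, 0 ≤ c t) (hw0 : ∀ t, 0 ≤ w t) (hc : IntegrableOn c (Ioc 0 T))
    (hw : IntegrableOn w (Ioc 0 T)) (hcne : ¬ c =ᵐ[volume.restrict (Ioc 0 T)] 0)
    (hwne : ¬ w =ᵐ[volume.restrict (Ioc 0 T)] 0)
    (hpos : (∀ᵐ t ∂volume.restrict (Ioc 0 T), 0 < c t) ∨
      (∀ᵐ t ∂volume.restrict (Ioc 0 T), 0 < w t))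
    (hg : Measurable g) (hgC : ∀ x ∈ Ioc 0 T, ∀ y ∈ Ioc 0 T, |g y - g x| ≤ C)
    (hgne : ∀ v, ¬ ∀ᵐ x ∂volume.restrict (Ioc 0 T), g x = v) :
    0 < ∫ p, (g p.2 - g p.1) ^ 2 ∂phiMeasure T δ ηb c w α := by
  have hint : Integrable (fun p => phiDensity T δ ηb c w α p * (g p.2 - g p.1) ^ 2)
      (squareMeasure T) := by
    refine (integrable_phiDensity hδ hα hc hw).mul_bdd (c := C ^ 2) (by fun_prop) ?_
    filter_upwards [ae_mem_squareMeasure T] with p hp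
    rw [norm_pow, Real.norm_eq_abs]
    exact pow_le_pow_left₀ (abs_nonneg _) (hgC _ hp.1 _ hp.2) 2
  rw [integral_phiMeasure hK hδ hα hc0 hw0 hc hw]
  exact integral_weighted_sq_sub_pos hw0 hc0 (fun p => mul_pos (Kker_pos hK p.1 p.2) (exp_pos _))
    hint hwne hcne hpos hgne hgne

end PhiAsMGF

theorem stmt2_general (T δ ηb : ℝ) (c w α β : ℝ → ℝ)
    (hT : 0 < T) (hδ : 0 < δ) (hη : 0 < ηb)
    (hc0 : ∀ t, 0 ≤ c t) (hcI : IntegrableOn c (Set.Icc 0 T))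
    (hw0 : ∀ t, 0 ≤ w t) (hwI : IntegrableOn w (Set.Icc 0 T))
    (hcne : ¬ c =ᵐ[volume.restrict (Set.Icc (0:ℝ) T)] 0)
    (hwne : ¬ w =ᵐ[volume.restrict (Set.Icc (0:ℝ) T)] 0)
    (hpos : (∀ᵐ t ∂volume, 0 < c t) ∨ (∀ᵐ t ∂volume, 0 < w t))
    (hα : MemM T ηb α) (hβ : MemM T ηb β) (hne : α ≠ β) :
    (∀ ε ∈ Set.Icc (0:ℝ) 1,
      0 < deriv (deriv (fun e => Phi T δ ηb c w (fun t => (1 - e) * α t + e * β t))) ε) ∧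
    (∀ ε ∈ Set.Ioo (0:ℝ) 1,
      Phi T δ ηb c w (fun t => (1 - ε) * α t + ε * β t) <
        (1 - ε) * Phi T δ ηb c w α + ε * Phi T δ ηb c w β) := by
  have hK : 0 < (ηb + δ) * T := by positivity
  have hIoc : volume.restrict (Ioc (0:ℝ) T) = volume.restrict (Icc 0 T) :=
    Measure.restrict_congr_set Ioc_ae_eq_Icc
  have hc := hcI.mono_set Ioc_subset_Icc_self
  have hw := hwI.mono_set Ioc_subset_Icc_self
  have hg : Measurable (β - α) := hβ.1.measurable.sub hα.1.measurable
  have hgC : ∀ x ∈ Ioc 0 T, ∀ y ∈ Ioc 0 T,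
      |(β - α) y - (β - α) x| ≤ (β T - β 0) + (α T - α 0) := fun x hx y hy =>
    abs_sub_sub_le_of_monotone hβ.1 hα.1 (Ioc_subset_Icc_self hx) (Ioc_subset_Icc_self hy)
  set ν := phiMeasure T δ ηb c w α
  have : IsFiniteMeasure ν := isFiniteMeasure_phiMeasure hδ.le hα.1 hc hw
  have hG : AEStronglyMeasurable (fun p : ℝ × ℝ => (β - α) p.2 - (β - α) p.1) ν := by fun_prop
  have hGC : ∀ᵐ p ∂ν, |(β - α) p.2 - (β - α) p.1| ≤ _ := ae_phiMeasure_abs_sub_le hgC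
  have hG2 := integral_sq_sub_phiMeasure_pos hδ.le hK hα.1 hc0 hw0 hc hw (hIoc ▸ hcne)
    (hIoc ▸ hwne) (hpos.imp ae_restrict_of_ae ae_restrict_of_ae) hg hgC
    (MemM.not_ae_sub_eq_const hT hα hβ hne)
  have hΦ (e : ℝ) : Phi T δ ηb c w (fun t => (1 - e) * α t + e * β t) =
      mgf (fun p => (β - α) p.2 - (β - α) p.1) ν e := by
    rw [← Phi_add_mul_eq_mgf hT.le hδ.le hK hα.1 hc0 hw0 hc hw hg hgC]
    congr 1; ext t; simp only [Pi.sub_apply]; ring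
  refine ⟨fun ε _ => ?_, fun ε hε => ?_⟩
  · rw [funext hΦ]
    exact deriv_deriv_mgf_pos hG hGC hG2 ε
  · have h := (strictConvexOn_mgf hG hGC hG2).2 (mem_univ 0) (mem_univ 1) zero_ne_one
      (sub_pos.2 hε.2) hε.1 (by ring)
    simp only [smul_eq_mul, mul_zero, mul_one, zero_add] at h
    rw [← hΦ, ← hΦ, ← hΦ] at h
    simpa using h

theorem stmt2 (T δ ηb : ℝ) (c w α β : ℝ → ℝ)
    (hT : 0 < T) (hδ : 0 < δ) (hη : 0 < ηb)
    (hc0 : ∀ t, 0 ≤ c t) (hcP : ∀ t, c (t + T) = c t) (hcI : IntegrableOn c (Set.Icc 0 T))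
    (hw0 : ∀ t, 0 ≤ w t) (hwP : ∀ t, w (t + T) = w t) (hwI : IntegrableOn w (Set.Icc 0 T))
    (hcne : ¬ c =ᵐ[volume.restrict (Set.Icc (0:ℝ) T)] 0)
    (hwne : ¬ w =ᵐ[volume.restrict (Set.Icc (0:ℝ) T)] 0)
    (hpos : (∀ᵐ t ∂volume, 0 < c t) ∨ (∀ᵐ t ∂volume, 0 < w t))
    (hα : MemM T ηb α) (hβ : MemM T ηb β) (hne : α ≠ β) :
    (∀ ε ∈ Set.Icc (0:ℝ) 1,
      0 < deriv (deriv (fun e => Phi T δ ηb c w (fun t => (1 - e) * α t + e * β t))) ε) ∧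
    (∀ ε ∈ Set.Ioo (0:ℝ) 1,
      Phi T δ ηb c w (fun t => (1 - ε) * α t + ε * β t) <
        (1 - ε) * Phi T δ ηb c w α + ε * Phi T δ ηb c w β) :=
  stmt2_general T δ ηb c w α β hT hδ hη hc0 hcI hw0 hwI hcne hwne hpos hα hβ hne
end

section
/- If F : [a,b] → ℝ is continuous, F'(t) exists and is finite at all points except a countable set, and F' (defined a.e.) belongs to L¹[a,b], then F is absolutely continuous on [a,b]. -/
open MeasureTheory intervalIntegral Set

theorem stmt12_general (a b : ℝ) (F F' : ℝ → ℝ)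
    (hF : ContinuousOn F (Set.Icc a b))
    (hd : ∃ E : Set ℝ, E.Countable ∧ ∀ t ∈ Set.Ioo a b \ E, HasDerivAt F (F' t) t)
    (hI : IntegrableOn F' (Set.Icc a b)) :
    ∀ x ∈ Set.Icc a b, F x = F a + ∫ t in a..x, F' t := by
  obtain ⟨E, hE, hF'⟩ := hd
  rintro x ⟨hax, hxb⟩
  have hsub : Icc a x ⊆ Icc a b := Icc_subset_Icc_right hxb
  rw [integral_eq_of_hasDerivAt_off_countable_of_le F F' hax hE (hF.mono hsub)
    (fun t ht => hF' t ⟨Ioo_subset_Ioo_right hxb ht.1, ht.2⟩)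
    ((intervalIntegrable_iff_integrableOn_Icc_of_le hax).2 (hI.mono_set hsub))]
  ring

theorem stmt12 (a b : ℝ) (hab : a < b) (F F' : ℝ → ℝ)
    (hF : ContinuousOn F (Set.Icc a b))
    (hd : ∃ E : Set ℝ, E.Countable ∧ ∀ t ∈ Set.Ioo a b \ E, HasDerivAt F (F' t) t)
    (hI : IntegrableOn F' (Set.Icc a b)) :
    ∀ x ∈ Set.Icc a b, F x = F a + ∫ t in a..x, F' t :=
  stmt12_general a b F F' hF hd hI
end

section
/- For any absolutely continuous u ∈ C(T) (continuous T-periodic) and any α ∈ M(T, η̄) with S = S[α]: ∫₀ᵀ (w(t)/c(t)) S(t)² u'(t) dt = ∫₀ᵀ h[α](t) [u(t) + S(t) u'(t)/c(t)] dt. -/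
/-!
With `g = c e^{α + δ t}` and `m = w e^{-α - δ t}`, the kernel integrals are affine in the
primitives of `g` and `m` on `[0, T]`: `S = e^{-α - δ t} I` and `h = m I - g J` with
`I' = g`, `J' = -m`. Since `w S² / c = I J + h S / c`, the identity reduces to
`∫ I J u' = ∫ h u = -∫ (I J)' u`, which is integration by parts for the absolutely continuous
functions `I J` and `u`. The boundary term vanishes because `u` is `T`-periodic and the two values
`(e^x - 1)⁻¹` and `(1 - e^{-x})⁻¹` of the kernel differ by exactly `1`, which makes
`I J` take the same value at `0` and at `T`.
-/

open MeasureTheory intervalIntegral Real Set Filter Topology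

theorem IntervalIntegrable.mul_monotone {f φ : ℝ → ℝ} {a b : ℝ}
    (hf : IntervalIntegrable f volume a b) (hφ : Monotone φ) :
    IntervalIntegrable (fun t => f t * φ t) volume a b := by
  rw [intervalIntegrable_iff] at hf ⊢
  refine hf.mul_bdd hφ.measurable.aestronglyMeasurable (c := max |φ (a ⊓ b)| |φ (a ⊔ b)|) ?_
  refine (ae_restrict_iff' measurableSet_uIoc).2 (ae_of_all _ fun x hx => ?_)
  have hx' := uIoc_subset_uIcc hx
  exact abs_le_max_abs_abs (hφ hx'.1) (hφ hx'.2)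

theorem IntervalIntegrable.mul_antitone {f φ : ℝ → ℝ} {a b : ℝ}
    (hf : IntervalIntegrable f volume a b) (hφ : Antitone φ) :
    IntervalIntegrable (fun t => f t * φ t) volume a b := by
  convert (hf.mul_monotone hφ.neg).neg using 1
  ext t
  simp

theorem intervalIntegral.integral_add_eq_of_integral_eq {f g p : ℝ → ℝ} {a b : ℝ}
    {μ : Measure ℝ}
    (hf : IntervalIntegrable f μ a b) (hg : IntervalIntegrable g μ a b)
    (h : ∫ x in a..b, f x ∂μ = ∫ x in a..b, g x ∂μ) :
    ∫ x in a..b, f x + p x ∂μ = ∫ x in a..b, g x + p x ∂μ := by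
  by_cases hp : IntervalIntegrable p μ a b
  · rw [intervalIntegral.integral_add hf hp, intervalIntegral.integral_add hg hp, h]
  · have hfp : ¬IntervalIntegrable (fun x => f x + p x) μ a b := fun h' =>
      hp (by simpa using h'.sub hf)
    have hgp : ¬IntervalIntegrable (fun x => g x + p x) μ a b := fun h' =>
      hp (by simpa using h'.sub hg)
    rw [integral_undef hfp, integral_undef hgp]

section Primitive

variable {F f : ℝ → ℝ} {a b : ℝ}

theorem ae_hasDerivAt_of_eq_add_integral (hf : IntervalIntegrable f volume a b)
    (hF : ∀ t, F t = F a + ∫ s in a..t, f s) :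
    ∀ᵐ x, x ∈ uIcc a b → HasDerivAt F (f x) x := by
  filter_upwards [hf.ae_hasDerivAt_integral] with x hx hxab
  rw [funext hF]
  exact (hx hxab a left_mem_uIcc).const_add _

theorem absolutelyContinuousOnInterval_of_eq_add_integral (hf : IntervalIntegrable f volume a b)
    (hF : ∀ t, F t = F a + ∫ s in a..t, f s) :
    AbsolutelyContinuousOnInterval F a b := by
  rw [funext hF]
  exact (LipschitzWith.const (F a)).lipschitzOnWith.absolutelyContinuousOnInterval.add
    (hf.absolutelyContinuousOnInterval_intervalIntegral left_mem_uIcc)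

end Primitive

theorem integral_mul_mul_deriv_eq_neg_of_eq_add_integral {I J u g j u' : ℝ → ℝ} {a b : ℝ}
    (hg : IntervalIntegrable g volume a b) (hj : IntervalIntegrable j volume a b)
    (hu' : IntervalIntegrable u' volume a b)
    (hI : ∀ t, I t = I a + ∫ s in a..t, g s) (hJ : ∀ t, J t = J a + ∫ s in a..t, j s)
    (hu : ∀ t, u t = u a + ∫ s in a..t, u' s) (hab : I b * J b * u b = I a * J a * u a) :
    ∫ t in a..b, I t * J t * u' t = -∫ t in a..b, (g t * J t + I t * j t) * u t := by
  have hIac := absolutelyContinuousOnInterval_of_eq_add_integral hg hI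
  have hJac := absolutelyContinuousOnInterval_of_eq_add_integral hj hJ
  have huac := absolutelyContinuousOnInterval_of_eq_add_integral hu' hu
  have hparts := (hIac.mul hJac).integral_deriv_mul_eq_sub huac
  have hderiv : ∀ᵐ x, x ∈ uIoc a b → deriv (I * J) x * u x + (I * J) x * deriv u x =
      (g x * J x + I x * j x) * u x + I x * J x * u' x := by
    filter_upwards [ae_hasDerivAt_of_eq_add_integral hg hI,
      ae_hasDerivAt_of_eq_add_integral hj hJ, ae_hasDerivAt_of_eq_add_integral hu' hu]
      with x hIx hJx hux hx
    have hx' := uIoc_subset_uIcc hx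
    rw [((hIx hx').mul (hJx hx')).deriv, (hux hx').deriv, Pi.mul_apply]
  have hint₁ : IntervalIntegrable (fun x => (g x * J x + I x * j x) * u x) volume a b :=
    ((hg.mul_continuousOn hJac.continuousOn).add
      (hj.continuousOn_mul hIac.continuousOn)).mul_continuousOn huac.continuousOn
  have hint₂ : IntervalIntegrable (fun x => I x * J x * u' x) volume a b :=
    hu'.continuousOn_mul (hIac.continuousOn.mul hJac.continuousOn)
  rw [integral_congr_ae hderiv, Pi.mul_apply, Pi.mul_apply, hab, sub_self,
    intervalIntegral.integral_add hint₁ hint₂] at hparts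
  linarith

theorem integral_mul_mul_deriv_add_eq_of_eq_add_integral {I J u g j u' p : ℝ → ℝ} {a b : ℝ}
    (hg : IntervalIntegrable g volume a b) (hj : IntervalIntegrable j volume a b)
    (hu' : IntervalIntegrable u' volume a b)
    (hI : ∀ t, I t = I a + ∫ s in a..t, g s) (hJ : ∀ t, J t = J a + ∫ s in a..t, j s)
    (hu : ∀ t, u t = u a + ∫ s in a..t, u' s) (hab : I b * J b * u b = I a * J a * u a) :
    ∫ t in a..b, I t * J t * u' t + p t =
      ∫ t in a..b, -((g t * J t + I t * j t) * u t) + p t := by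
  have hIc := (absolutelyContinuousOnInterval_of_eq_add_integral hg hI).continuousOn
  have hJc := (absolutelyContinuousOnInterval_of_eq_add_integral hj hJ).continuousOn
  have huc := (absolutelyContinuousOnInterval_of_eq_add_integral hu' hu).continuousOn
  refine integral_add_eq_of_integral_eq (hu'.continuousOn_mul (hIc.mul hJc))
    (((hg.mul_continuousOn hJc).add (hj.continuousOn_mul hIc)).mul_continuousOn huc).neg ?_
  rw [integral_mul_mul_deriv_eq_neg_of_eq_add_integral hg hj hu' hI hJ hu hab,
    intervalIntegral.integral_neg]

theorem one_sub_exp_neg_inv {x : ℝ} (hx : x ≠ 0) :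
    (1 - exp (-x))⁻¹ = (exp x - 1)⁻¹ + 1 := by
  have h1 : exp x - 1 ≠ 0 := sub_ne_zero.2 fun h => hx (exp_eq_one_iff x |>.1 h)
  rw [exp_neg]
  field_simp
  ring

section Kernel

variable {T δ ηb t : ℝ} {φ c w α : ℝ → ℝ}

theorem integral_Kker_mul (hx : (ηb + δ) * T ≠ 0) (hφ : IntervalIntegrable φ volume 0 T)
    (ht : t ∈ Icc 0 T) :
    ∫ r in (0:ℝ)..T, Kker T δ ηb t r * φ r =
      (exp ((ηb + δ) * T) - 1)⁻¹ * (∫ r in (0:ℝ)..T, φ r) +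
        ∫ r in (0:ℝ)..t, φ r := by
  have hK : ∀ r, Kker T δ ηb t r * φ r =
      (exp ((ηb + δ) * T) - 1)⁻¹ * φ r + (Iio t).indicator φ r := by
    intro r
    by_cases h : r < t
    · rw [Kker, if_pos h, indicator_of_mem (show r ∈ Iio t from h), neg_mul,
        one_sub_exp_neg_inv hx]
      ring
    · rw [Kker, if_neg h, indicator_of_notMem (show r ∉ Iio t from h), add_zero]
  have hIio : ∫ r in (0:ℝ)..T, (Iio t).indicator φ r = ∫ r in (0:ℝ)..t, φ r := by
    rw [← integral_indicator ht]
    exact integral_congr_ae ((indicator_ae_eq_of_ae_eq_set Iio_ae_eq_Iic).mono fun _ h _ => h)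
  rw [integral_congr fun r _ => hK r, intervalIntegral.integral_add (hφ.const_mul _)
    ⟨hφ.1.indicator measurableSet_Iio, hφ.2.indicator measurableSet_Iio⟩,
    intervalIntegral.integral_const_mul, hIio]

theorem integral_Kker_swap_mul (hx : (ηb + δ) * T ≠ 0) (hφ : IntervalIntegrable φ volume 0 T)
    (ht : t ∈ Icc 0 T) :
    ∫ r in (0:ℝ)..T, Kker T δ ηb r t * φ r =
      ((exp ((ηb + δ) * T) - 1)⁻¹ + 1) * (∫ r in (0:ℝ)..T, φ r) -
        ∫ r in (0:ℝ)..t, φ r := by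
  have hK : ∀ r, Kker T δ ηb r t * φ r =
      ((exp ((ηb + δ) * T) - 1)⁻¹ + 1) * φ r - (Iic t).indicator φ r := by
    intro r
    by_cases h : r ≤ t
    · rw [Kker, if_neg h.not_gt, indicator_of_mem (show r ∈ Iic t from h)]
      ring
    · rw [Kker, if_pos (not_le.1 h), indicator_of_notMem (show r ∉ Iic t from h), neg_mul,
        one_sub_exp_neg_inv hx, sub_zero]
  rw [integral_congr fun r _ => hK r, intervalIntegral.integral_sub (hφ.const_mul _)
    ⟨hφ.1.indicator measurableSet_Iic, hφ.2.indicator measurableSet_Iic⟩,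
    intervalIntegral.integral_const_mul]
  exact congrArg _ (integral_indicator ht)


theorem intervalIntegrable_mul_exp_add {f : ℝ → ℝ} {a b : ℝ}
    (hf : IntervalIntegrable f volume a b) (hα : Monotone α) (hδ : 0 ≤ δ) :
    IntervalIntegrable (fun r => f r * exp (α r + δ * r)) volume a b :=
  hf.mul_monotone fun _ _ h => exp_le_exp.2 (add_le_add (hα h) (mul_le_mul_of_nonneg_left h hδ))

theorem intervalIntegrable_mul_exp_neg_sub {f : ℝ → ℝ} {a b : ℝ}
    (hf : IntervalIntegrable f volume a b) (hα : Monotone α) (hδ : 0 ≤ δ) :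
    IntervalIntegrable (fun r => f r * exp (-(α r) - δ * r)) volume a b :=
  hf.mul_antitone fun _ _ h =>
    exp_le_exp.2 (sub_le_sub (neg_le_neg (hα h)) (mul_le_mul_of_nonneg_left h hδ))

noncomputable def Ikern (T δ ηb : ℝ) (c α : ℝ → ℝ) (t : ℝ) : ℝ :=
  (exp ((ηb + δ) * T) - 1)⁻¹ * (∫ r in (0:ℝ)..T, c r * exp (α r + δ * r)) +
    ∫ r in (0:ℝ)..t, c r * exp (α r + δ * r)

noncomputable def Jkern (T δ ηb : ℝ) (w α : ℝ → ℝ) (t : ℝ) : ℝ :=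
  ((exp ((ηb + δ) * T) - 1)⁻¹ + 1) * (∫ r in (0:ℝ)..T, w r * exp (-(α r) - δ * r)) -
    ∫ r in (0:ℝ)..t, w r * exp (-(α r) - δ * r)

theorem Ikern_mul_Jkern_right_eq_left :
    Ikern T δ ηb c α T * Jkern T δ ηb w α T =
      Ikern T δ ηb c α 0 * Jkern T δ ηb w α 0 := by
  simp only [Ikern, Jkern, integral_same]
  ring

theorem Sfun_eq_exp_mul_Ikern (hx : (ηb + δ) * T ≠ 0)
    (hc : IntervalIntegrable (fun r => c r * exp (α r + δ * r)) volume 0 T) (ht : t ∈ Icc 0 T) :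
    Sfun T δ ηb c α t = exp (-(α t) - δ * t) * Ikern T δ ηb c α t := by
  simp_rw [Sfun, mul_assoc]
  rw [integral_Kker_mul hx hc ht, Ikern]

theorem hfun_eq (hx : (ηb + δ) * T ≠ 0)
    (hc : IntervalIntegrable (fun r => c r * exp (α r + δ * r)) volume 0 T)
    (hw : IntervalIntegrable (fun r => w r * exp (-(α r) - δ * r)) volume 0 T)
    (ht : t ∈ Icc 0 T) :
    hfun T δ ηb c w α t = w t * exp (-(α t) - δ * t) * Ikern T δ ηb c α t -
      c t * exp (α t + δ * t) * Jkern T δ ηb w α t := by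
  simp_rw [hfun, mul_assoc]
  rw [integral_Kker_mul hx hc ht, integral_Kker_swap_mul hx hw ht, Ikern, Jkern]

theorem div_mul_Sfun_sq_mul_eq (hx : (ηb + δ) * T ≠ 0)
    (hc : IntervalIntegrable (fun r => c r * exp (α r + δ * r)) volume 0 T)
    (hw : IntervalIntegrable (fun r => w r * exp (-(α r) - δ * r)) volume 0 T)
    (ht : t ∈ Icc 0 T) (hct : c t ≠ 0) (v : ℝ) :
    w t / c t * Sfun T δ ηb c α t ^ 2 * v = Ikern T δ ηb c α t * Jkern T δ ηb w α t * v +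
      hfun T δ ηb c w α t * (Sfun T δ ηb c α t * v / c t) := by
  have hexp : exp (α t + δ * t) * exp (-(α t) - δ * t) = 1 := by
    rw [← exp_add, ← exp_zero]
    ring_nf
  rw [hfun_eq hx hc hw ht, Sfun_eq_exp_mul_Ikern hx hc ht, div_eq_mul_inv, div_eq_mul_inv]
  linear_combination Ikern T δ ηb c α t * Jkern T δ ηb w α t * v *
    (c t * (c t)⁻¹ * hexp + mul_inv_cancel₀ hct)

end Kernel

theorem stmt14_general (T δ ηb : ℝ) (c w α u u' : ℝ → ℝ)
    (hT : 0 < T) (hδ : 0 < δ) (hη : 0 < ηb)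
    (hcpos : ∀ t, 0 < c t) (hcI : IntegrableOn c (Set.Icc 0 T))
    (hwI : IntegrableOn w (Set.Icc 0 T))
    (hα : MemM T ηb α)
    (huP : ∀ t, u (t + T) = u t)
    (hu'I : LocallyIntegrable u')
    (huAC : ∀ t, u t = u 0 + ∫ s in (0:ℝ)..t, u' s) :
    (∫ t in (0:ℝ)..T, w t / c t * (Sfun T δ ηb c α t) ^ 2 * u' t) =
      ∫ t in (0:ℝ)..T, hfun T δ ηb c w α t * (u t + Sfun T δ ηb c α t * u' t / c t) := by
  have hx : (ηb + δ) * T ≠ 0 := by positivity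
  have hc := intervalIntegrable_mul_exp_add
    ((intervalIntegrable_iff_integrableOn_Icc_of_le hT.le).2 hcI) hα.1 hδ.le
  have hw := intervalIntegrable_mul_exp_neg_sub
    ((intervalIntegrable_iff_integrableOn_Icc_of_le hT.le).2 hwI) hα.1 hδ.le
  have huT : u T = u 0 := by simpa using huP 0
  have hparts := integral_mul_mul_deriv_add_eq_of_eq_add_integral
    (I := Ikern T δ ηb c α) (J := Jkern T δ ηb w α)
    (p := fun t => hfun T δ ηb c w α t * (Sfun T δ ηb c α t * u' t / c t)) hc hw.neg
    (hu'I.integrableOn_isCompact isCompact_uIcc).intervalIntegrable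
    (fun t => by simp [Ikern]) (fun t => by simp [Jkern, sub_eq_add_neg]) huAC
    (by rw [huT, Ikern_mul_Jkern_right_eq_left])
  convert hparts using 1 <;> refine integral_congr fun t ht => ?_ <;>
    rw [uIcc_of_le hT.le] at ht
  · exact div_mul_Sfun_sq_mul_eq hx hc hw ht (hcpos t).ne' _
  · simp only [hfun_eq hx hc hw ht, Pi.neg_apply]
    ring

theorem stmt14 (T δ ηb : ℝ) (c w α u u' : ℝ → ℝ)
    (hT : 0 < T) (hδ : 0 < δ) (hη : 0 < ηb)
    (hcpos : ∀ t, 0 < c t) (hcP : ∀ t, c (t + T) = c t) (hcI : IntegrableOn c (Set.Icc 0 T))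
    (hw0 : ∀ t, 0 ≤ w t) (hwP : ∀ t, w (t + T) = w t) (hwI : IntegrableOn w (Set.Icc 0 T))
    (hα : MemM T ηb α)
    (huP : ∀ t, u (t + T) = u t)
    (hu'I : LocallyIntegrable u')
    (huAC : ∀ t, u t = u 0 + ∫ s in (0:ℝ)..t, u' s) :
    (∫ t in (0:ℝ)..T, w t / c t * (Sfun T δ ηb c α t) ^ 2 * u' t) =
      ∫ t in (0:ℝ)..T, hfun T δ ηb c w α t * (u t + Sfun T δ ηb c α t * u' t / c t) :=
  stmt14_general T δ ηb c w α u u' hT hδ hη hcpos hcI hwI hα huP hu'I huAC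
end
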